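/- For every integer k ≥ 1, every integer n ≥ 1, and all real numbers x₁, …, xₙ, the falling factorial of the product satisfies (x₁x₂⋯xₙ)^(k) = ∑_{L} c^{(k)}_L · ∏_{i=1}^{n} x_i^(l_i), where the sum runs over all multi-indices L = (l₁,…,lₙ) with 1 ≤ l_i ≤ k for each i. -/
import Mathlib


open Nat

/-- Unsigned Stirling numbers of the first kind: the number of permutations of
`n` elements with exactly `p` cycles. -/
def stirling1 : ℕ → ℕ → ℕ
  | 0, 0 => 1
  | 0, _ + 1 => 0
  | _ + 1, 0 => 0
  | n + 1, p + 1 => n * stirling1 n (p + 1) + stirling1 n p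

/-- Stirling numbers of the second kind: the number of partitions of an
`n`-element set into `p` nonempty blocks (`stirling2 p l = 0` when `p < l`). -/
def stirling2 : ℕ → ℕ → ℕ
  | 0, 0 => 1
  | 0, _ + 1 => 0
  | _ + 1, 0 => 0
  | n + 1, p + 1 => (p + 1) * stirling2 n (p + 1) + stirling2 n p

/-- The multivariable coefficients
`c^(k)_L = ∑_{p=1}^k (-1)^(k-p) s(k,p) ∏_i S(p, l_i)`. -/
def cMulti (k : ℕ) {n : ℕ} (L : Fin n → ℕ) : ℤ :=
  ∑ p ∈ Finset.Icc 1 k,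
    (-1 : ℤ) ^ (k - p) * (stirling1 k p : ℤ) * ∏ i, (stirling2 p (L i) : ℤ)

lemma stirling1_zero_right (k : ℕ) (hk : 1 ≤ k) : stirling1 k 0 = 0 := by
  cases k with
  | zero => omega
  | succ n => rfl

lemma stirling2_zero_right (p : ℕ) (hp : 1 ≤ p) : stirling2 p 0 = 0 := by
  cases p with
  | zero => omega
  | succ n => rfl

lemma stirling2_eq_zero_of_lt : ∀ p l : ℕ, p < l → stirling2 p l = 0
  | 0, l, h => by cases l with | zero => omega | succ m => rfl
  | p + 1, l, h => by
    cases l with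
    | zero => omega
    | succ m =>
      show (m + 1) * stirling2 p (m + 1) + stirling2 p m = 0
      rw [stirling2_eq_zero_of_lt p (m+1) (by omega), stirling2_eq_zero_of_lt p m (by omega)]
      ring

lemma pow_eq_sum_stirling2 (p : ℕ) (y : ℝ) :
    y ^ p = ∑ l ∈ Finset.range (p + 1),
      (stirling2 p l : ℝ) * (descPochhammer ℝ l).eval y := by
  induction p with
  | zero => simp [stirling2]
  | succ p ih =>
    have key : ∀ l : ℕ, y * (descPochhammer ℝ l).eval y =
        (descPochhammer ℝ (l + 1)).eval y + (l : ℝ) * (descPochhammer ℝ l).eval y := by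
      intro l
      rw [descPochhammer_succ_eval]
      ring
    have : y ^ (p + 1) = ∑ l ∈ Finset.range (p + 1),
        (stirling2 p l : ℝ) * ((descPochhammer ℝ (l + 1)).eval y
          + (l : ℝ) * (descPochhammer ℝ l).eval y) := by
      rw [pow_succ, ih, Finset.sum_mul]
      refine Finset.sum_congr rfl fun l _ => ?_
      rw [mul_comm _ y, ← mul_assoc, mul_comm y, mul_assoc, key]
    rw [this]
    rw [Finset.sum_range_succ' (fun l => (stirling2 (p+1) l : ℝ) * (descPochhammer ℝ l).eval y)]
    rw [stirling2_zero_right (p+1) (by omega)]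
    simp only [Nat.cast_zero, zero_mul, add_zero]
    have hrec : ∀ m : ℕ, stirling2 (p + 1) (m + 1) = (m + 1) * stirling2 p (m + 1) + stirling2 p m :=
      fun m => rfl
    simp only [hrec, Finset.mul_sum, mul_add, Finset.sum_add_distrib]
    push_cast
    simp only [add_mul, Finset.sum_add_distrib]
    have hC : ∑ x ∈ Finset.range (p + 1),
        ((x:ℝ) + 1) * (stirling2 p (x + 1) : ℝ) * Polynomial.eval y (descPochhammer ℝ (x + 1)) =
        ∑ x ∈ Finset.range (p + 1),
        (x:ℝ) * (stirling2 p x : ℝ) * Polynomial.eval y (descPochhammer ℝ x) := by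
      set h : ℕ → ℝ := fun m => (m:ℝ) * (stirling2 p m : ℝ) * Polynomial.eval y (descPochhammer ℝ m) with hh
      have e1 := Finset.sum_range_succ' h (p+1)
      have e2 := Finset.sum_range_succ h (p+1)
      have h0 : h 0 = 0 := by simp [hh]
      have hp1 : h (p+1) = 0 := by
        simp [hh, stirling2_eq_zero_of_lt p (p+1) (by omega)]
      have key2 : ∑ x ∈ Finset.range (p + 1), h (x + 1) = ∑ x ∈ Finset.range (p + 1), h x := by
        have := e1.symm.trans e2
        rw [h0, hp1] at this
        linarith
      calc ∑ x ∈ Finset.range (p + 1),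
            ((x:ℝ) + 1) * (stirling2 p (x + 1) : ℝ) * Polynomial.eval y (descPochhammer ℝ (x + 1))
          = ∑ x ∈ Finset.range (p + 1), h (x + 1) := by
            refine Finset.sum_congr rfl fun l _ => ?_
            simp only [hh]
            push_cast
            ring
        _ = ∑ x ∈ Finset.range (p + 1), h x := key2
        _ = _ := by simp only [hh]
    have comb : (∑ x ∈ Finset.range (p + 1), (x:ℝ) * ↑(stirling2 p (x + 1)) * Polynomial.eval y (descPochhammer ℝ (x + 1))) +
        ∑ x ∈ Finset.range (p + 1), 1 * ↑(stirling2 p (x + 1)) * Polynomial.eval y (descPochhammer ℝ (x + 1)) =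
        ∑ x ∈ Finset.range (p + 1), ((x:ℝ) + 1) * ↑(stirling2 p (x + 1)) * Polynomial.eval y (descPochhammer ℝ (x + 1)) := by
      rw [← Finset.sum_add_distrib]
      exact Finset.sum_congr rfl fun l _ => by ring
    have hB : ∑ x ∈ Finset.range (p+1), (stirling2 p x : ℝ) * ((x:ℝ) * Polynomial.eval y (descPochhammer ℝ x)) = ∑ x ∈ Finset.range (p + 1), (x:ℝ) * (stirling2 p x : ℝ) * Polynomial.eval y (descPochhammer ℝ x) :=
      Finset.sum_congr rfl fun l _ => by ring
    linarith [hC, comb, hB]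

lemma stirling1_eq_zero_of_lt : ∀ k p : ℕ, k < p → stirling1 k p = 0
  | 0, p, h => by cases p with | zero => omega | succ m => rfl
  | k + 1, p, h => by
    cases p with
    | zero => omega
    | succ m =>
      show k * stirling1 k (m + 1) + stirling1 k m = 0
      rw [stirling1_eq_zero_of_lt k (m+1) (by omega), stirling1_eq_zero_of_lt k m (by omega)]
      ring

lemma desc_aux (k : ℕ) (y : ℝ) :
    (-1:ℝ)^k * (descPochhammer ℝ k).eval y =
      ∑ p ∈ Finset.range (k + 1), (-1:ℝ)^p * (stirling1 k p : ℝ) * y^p := by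
  induction k with
  | zero => simp [stirling1]
  | succ k ih =>
    set g : ℕ → ℝ := fun p => (-1:ℝ)^p * (stirling1 k p : ℝ) * y^p with hg
    have hg0 : (k:ℝ) * g 0 = 0 := by
      rcases Nat.eq_zero_or_pos k with h | h
      · simp [h]
      · simp [hg, stirling1_zero_right k h]
    have hgk1 : g (k + 1) = 0 := by
      simp [hg, stirling1_eq_zero_of_lt k (k+1) (by omega)]
    have lhs_eq : (-1:ℝ)^(k+1) * (descPochhammer ℝ (k+1)).eval y =
        ((k:ℝ) - y) * ∑ p ∈ Finset.range (k + 1), g p := by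
      rw [descPochhammer_succ_eval, ← ih]
      push_cast
      ring
    rw [lhs_eq]
    rw [Finset.sum_range_succ'
      (fun p => (-1:ℝ)^p * (stirling1 (k+1) p : ℝ) * y^p) (k+1)]
    have hz : (-1:ℝ)^0 * (stirling1 (k+1) 0 : ℝ) * y^0 = 0 := by
      simp [stirling1_zero_right (k+1) (by omega)]
    rw [hz, add_zero]
    have hrec : ∀ m : ℕ, stirling1 (k+1) (m+1) = k * stirling1 k (m+1) + stirling1 k m :=
      fun m => rfl
    have expand : ∀ q : ℕ, (-1:ℝ)^(q+1) * (stirling1 (k+1) (q+1) : ℝ) * y^(q+1) =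
        (k:ℝ) * g (q+1) + (-y) * g q := by
      intro q
      rw [hrec]
      simp only [hg]
      push_cast [hrec]
      ring
    rw [Finset.sum_congr rfl fun q _ => expand q, Finset.sum_add_distrib,
      ← Finset.mul_sum, ← Finset.mul_sum]
    have shift : ∑ q ∈ Finset.range (k + 1), g (q + 1) =
        (∑ q ∈ Finset.range (k + 1), g q) - g 0 := by
      have e1 := Finset.sum_range_succ' g (k+1)
      have e2 := Finset.sum_range_succ g (k+1)
      rw [hgk1] at e2
      linarith [e1.symm.trans e2]
    rw [shift]
    ring_nf
    linarith [hg0]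

lemma desc_eq_sum_stirling1 (k : ℕ) (y : ℝ) :
    (descPochhammer ℝ k).eval y =
      ∑ p ∈ Finset.range (k + 1), (-1:ℝ)^(k-p) * (stirling1 k p : ℝ) * y^p := by
  have h := desc_aux k y
  have : (descPochhammer ℝ k).eval y = (-1:ℝ)^k * ((-1:ℝ)^k * (descPochhammer ℝ k).eval y) := by
    rw [← mul_assoc, ← pow_add, Even.neg_one_pow ⟨k, by ring⟩, one_mul]
  rw [this, h, Finset.mul_sum]
  refine Finset.sum_congr rfl fun p hp => ?_
  have hp' : p ≤ k := by simpa using Nat.lt_succ_iff.mp (Finset.mem_range.mp hp)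
  have : (-1:ℝ)^k = (-1:ℝ)^(k-p) * (-1:ℝ)^p := by
    rw [← pow_add, Nat.sub_add_cancel hp']
  rw [this]
  have h2 : ((-1:ℝ)^p) * ((-1:ℝ)^p) = 1 := by
    rw [← pow_add, Even.neg_one_pow ⟨p, by ring⟩]
  calc (-1:ℝ)^(k-p) * (-1:ℝ)^p * ((-1:ℝ)^p * (stirling1 k p : ℝ) * y^p)
      = ((-1:ℝ)^p * (-1:ℝ)^p) * ((-1:ℝ)^(k-p) * (stirling1 k p : ℝ) * y^p) := by ring
    _ = _ := by rw [h2, one_mul]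

/-- The falling factorial of a product of `n` variables:
`(x₁⋯xₙ)^(k) = ∑_L c^(k)_L ∏_i x_i^(l_i)`, the sum over `L` with `1 ≤ l_i ≤ k`. -/
theorem falling_factorial_of_multi_product (k n : ℕ) (hk : 1 ≤ k) (hn : 1 ≤ n)
    (x : Fin n → ℝ) :
    (descPochhammer ℝ k).eval (∏ i, x i) =
      ∑ L ∈ Fintype.piFinset (fun _ : Fin n => Finset.Icc 1 k),
        (cMulti k L : ℝ) * ∏ i, (descPochhammer ℝ (L i)).eval (x i) := by

  set F : ℕ → (Fin n → ℕ) → ℝ := fun p L =>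
    ∏ i, ((stirling2 p (L i) : ℝ) * (descPochhammer ℝ (L i)).eval (x i)) with hF
  have step1 : ∀ p : ℕ, (∏ i, x i) ^ p =
      ∑ L ∈ Fintype.piFinset (fun _ : Fin n => Finset.range (p + 1)), F p L := by
    intro p
    rw [← Finset.prod_pow,
      Finset.prod_congr rfl fun i _ => pow_eq_sum_stirling2 p (x i)]
    exact Finset.prod_univ_sum _ _
  have step2 : ∀ p : ℕ, 1 ≤ p → p ≤ k →
      (∑ L ∈ Fintype.piFinset (fun _ : Fin n => Finset.range (p + 1)), F p L) =
      ∑ L ∈ Fintype.piFinset (fun _ : Fin n => Finset.Icc 1 k), F p L := by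
    intro p hp1 hpk
    have key : ∀ (t : Fin n → Finset ℕ),
        (∀ i, Finset.Icc 1 p ⊆ t i) →
        (∀ (L : Fin n → ℕ), (∀ i, L i ∈ t i) → (∃ i, L i ∉ Finset.Icc 1 p) →
          ∃ i, stirling2 p (L i) = 0) →
        (∑ L ∈ Fintype.piFinset t, F p L) =
        ∑ L ∈ Fintype.piFinset (fun _ : Fin n => Finset.Icc 1 p), F p L := by
      intro t hsub hvan
      refine (Finset.sum_subset (Fintype.piFinset_subset _ _ fun i => hsub i) ?_).symm
      intro L hL hL'
      simp only [Fintype.mem_piFinset] at hL hL'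
      push_neg at hL'
      obtain ⟨i, hi⟩ := hvan L hL hL'
      exact Finset.prod_eq_zero (Finset.mem_univ i) (by simp [hi])
    have e1 : (∑ L ∈ Fintype.piFinset (fun _ : Fin n => Finset.range (p + 1)), F p L) =
        ∑ L ∈ Fintype.piFinset (fun _ : Fin n => Finset.Icc 1 p), F p L := by
      refine key _ (fun i => ?_) (fun L hL h => ?_)
      · intro a ha
        simp only [Finset.mem_Icc] at ha
        simp only [Finset.mem_range]
        omega
      · obtain ⟨i, hi⟩ := h
        refine ⟨i, ?_⟩
        have := hL i
        simp only [Finset.mem_range] at this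
        simp only [Finset.mem_Icc] at hi
        have h0 : L i = 0 := by omega
        rw [h0]
        exact stirling2_zero_right p hp1
    have e2 : (∑ L ∈ Fintype.piFinset (fun _ : Fin n => Finset.Icc 1 k), F p L) =
        ∑ L ∈ Fintype.piFinset (fun _ : Fin n => Finset.Icc 1 p), F p L := by
      refine key _ (fun i => ?_) (fun L hL h => ?_)
      · intro a ha
        simp only [Finset.mem_Icc] at ha ⊢
        omega
      · obtain ⟨i, hi⟩ := h
        refine ⟨i, ?_⟩
        have := hL i
        simp only [Finset.mem_Icc] at this hi
        exact stirling2_eq_zero_of_lt p (L i) (by omega)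
    rw [e1, e2]
  calc (descPochhammer ℝ k).eval (∏ i, x i)
      = ∑ p ∈ Finset.range (k + 1),
          (-1:ℝ)^(k-p) * (stirling1 k p : ℝ) * (∏ i, x i)^p :=
        desc_eq_sum_stirling1 k _
    _ = ∑ p ∈ Finset.Icc 1 k,
          (-1:ℝ)^(k-p) * (stirling1 k p : ℝ) * (∏ i, x i)^p := by
        refine (Finset.sum_subset ?_ ?_).symm
        · intro p hp; simp only [Finset.mem_Icc] at hp; simp only [Finset.mem_range]; omega
        · intro p hp hp'
          simp only [Finset.mem_range] at hp
          simp only [Finset.mem_Icc] at hp'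
          have : p = 0 := by omega
          subst this
          rw [stirling1_zero_right k hk]
          simp
    _ = ∑ p ∈ Finset.Icc 1 k, (-1:ℝ)^(k-p) * (stirling1 k p : ℝ) *
          ∑ L ∈ Fintype.piFinset (fun _ : Fin n => Finset.Icc 1 k), F p L := by
        refine Finset.sum_congr rfl fun p hp => ?_
        simp only [Finset.mem_Icc] at hp
        rw [step1, step2 p hp.1 hp.2]
    _ = ∑ L ∈ Fintype.piFinset (fun _ : Fin n => Finset.Icc 1 k),
          ∑ p ∈ Finset.Icc 1 k, (-1:ℝ)^(k-p) * (stirling1 k p : ℝ) * F p L := by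
        simp_rw [Finset.mul_sum]
        exact Finset.sum_comm
    _ = _ := by
        refine Finset.sum_congr rfl fun L hL => ?_
        simp only [hF, Finset.prod_mul_distrib]
        rw [cMulti]
        push_cast
        rw [Finset.sum_mul]
        refine Finset.sum_congr rfl fun p hp => ?_
        ring
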